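/- arXiv:1601.04230 — 5 statements merged into one kernel-verified Lean document; each statement's English description precedes it below -/
import Mathlib

section
/- Let s ∈ (0,1) and let A : ℝ³ → ℝ³ be continuous. Then the space ℋ of (a.e.-equivalence classes of) measurable functions u : ℝ³ → ℂ with ‖u‖_{s,A} < ∞, equipped with the real scalar product ⟨u,v⟩_{s,A} = Re∫_{ℝ³} u·conj(v) dx + (c_s/2)·Re∬_{ℝ³×ℝ³} (e^{−i(x−y)·A((x+y)/2)}u(x) − u(y))·conj(e^{−i(x−y)·A((x+y)/2)}v(x) − v(y))/|x−y|^{3+2s} dx dy, is a real Hilbert space; in particular, every sequence {u_n} ⊂ ℋ that is Cauchy for the norm ‖·‖_{s,A} converges in this norm to some u ∈ ℋ. -/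
noncomputable section

open MeasureTheory Filter Topology
open scoped ENNReal

abbrev R3 : Type := EuclideanSpace ℝ (Fin 3)

/-- The normalizing constant `c_s`. -/
def cS (s : ℝ) : ℝ :=
  s * (2:ℝ) ^ (2*s) * Real.Gamma ((3 + 2*s)/2) / (Real.pi ^ ((3:ℝ)/2) * Real.Gamma (1 - s))

/-- The magnetic phase `(x-y) · A((x+y)/2)`. -/
def phase (A : R3 → R3) (x y : R3) : ℝ :=
  inner ℝ (x - y) (A ((2:ℝ)⁻¹ • (x + y)))

/-- Integrand of the magnetic Gagliardo seminorm. -/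
def magKer (s : ℝ) (A : R3 → R3) (u : R3 → ℂ) (x y : R3) : ℝ≥0∞ :=
  ENNReal.ofReal (‖Complex.exp (-(phase A x y : ℂ) * Complex.I) * u x - u y‖ ^ 2
      / ‖x - y‖ ^ (3 + 2*s))

/-- Squared magnetic Gagliardo seminorm `[u]²_{s,A}`. -/
def magSemi2 (s : ℝ) (A : R3 → R3) (u : R3 → ℂ) : ℝ≥0∞ :=
  ENNReal.ofReal (cS s / 2) * ∫⁻ x, ∫⁻ y, magKer s A u x y

/-- Squared `L²` norm. -/
def l2sq (u : R3 → ℂ) : ℝ≥0∞ := ∫⁻ x, ENNReal.ofReal (‖u x‖ ^ 2)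

/-- Squared magnetic Sobolev norm `‖u‖²_{s,A}`. -/
def magNorm2 (s : ℝ) (A : R3 → R3) (u : R3 → ℂ) : ℝ≥0∞ :=
  l2sq u + magSemi2 s A u

/-- Smooth compactly supported complex functions. -/
def IsCinfc (u : R3 → ℂ) : Prop := ContDiff ℝ (⊤ : ℕ∞) u ∧ HasCompactSupport u

/-- `u` belongs to `H^s_A(ℝ³,ℂ)`, the closure of `C_c^∞` in `ℋ`. -/
def MemHsA (s : ℝ) (A : R3 → R3) (u : R3 → ℂ) : Prop :=
  AEMeasurable u ∧ magNorm2 s A u ≠ ⊤ ∧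
    ∀ ε > (0:ℝ), ∃ φ : R3 → ℂ, IsCinfc φ ∧
      magNorm2 s A (fun x => u x - φ x) < ENNReal.ofReal (ε ^ 2)

section aux
variable {s : ℝ} {A : R3 → R3}

lemma phase_continuous (hA : Continuous A) :
    Continuous (fun z : R3 × R3 => phase A z.1 z.2) := by
  unfold phase
  fun_prop

lemma expPhase_continuous (hA : Continuous A) :
    Continuous (fun z : R3 × R3 =>
      Complex.exp (-(phase A z.1 z.2 : ℂ) * Complex.I)) :=
  Complex.continuous_exp.comp
    (((Complex.continuous_ofReal.comp (phase_continuous hA)).neg).mul continuous_const)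

lemma magKer_aemeasurable (hs : 0 < s) (hA : Continuous A) {u : R3 → ℂ} (hu : AEMeasurable u) :
    AEMeasurable (fun z : R3 × R3 => magKer s A u z.1 z.2) (volume.prod volume) := by
  apply ENNReal.measurable_ofReal.comp_aemeasurable
  apply AEMeasurable.div
  · have h1 := (expPhase_continuous hA).aemeasurable (μ := (volume : Measure R3).prod volume)
    have h2 : AEMeasurable (fun z : R3 × R3 => u z.1) ((volume : Measure R3).prod volume) :=
      hu.comp_quasiMeasurePreserving Measure.quasiMeasurePreserving_fst
    have h3 : AEMeasurable (fun z : R3 × R3 => u z.2) ((volume : Measure R3).prod volume) :=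
      hu.comp_quasiMeasurePreserving Measure.quasiMeasurePreserving_snd
    exact (continuous_pow 2).measurable.comp_aemeasurable ((h1.mul h2).sub h3).norm
  · exact ((Continuous.rpow_const (continuous_fst.sub continuous_snd).norm
      (fun _ => Or.inr (by linarith))).aemeasurable)

lemma magSemi2_eq_prod (hs : 0 < s) (hA : Continuous A) {u : R3 → ℂ} (hu : AEMeasurable u) :
    magSemi2 s A u = ENNReal.ofReal (cS s / 2)
      * ∫⁻ z : R3 × R3, magKer s A u z.1 z.2 ∂(volume.prod volume) := by
  rw [magSemi2, lintegral_lintegral (magKer_aemeasurable hs hA hu)]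

lemma magKer_neg (u : R3 → ℂ) (x y : R3) :
    magKer s A (fun t => - u t) x y = magKer s A u x y := by
  unfold magKer
  congr 2
  rw [show Complex.exp (-(phase A x y : ℂ) * Complex.I) * (- u x) - (- u y)
      = -(Complex.exp (-(phase A x y : ℂ) * Complex.I) * u x - u y) by ring, norm_neg]

lemma magNorm2_neg (u : R3 → ℂ) :
    magNorm2 s A (fun t => - u t) = magNorm2 s A u := by
  unfold magNorm2 l2sq magSemi2
  simp_rw [norm_neg, magKer_neg]

lemma magKer_add_le (f g : R3 → ℂ) (x y : R3) :
    magKer s A (fun t => f t + g t) x y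
      ≤ 2 * magKer s A f x y + 2 * magKer s A g x y := by
  unfold magKer
  set E := Complex.exp (-(phase A x y : ℂ) * Complex.I) with hE
  set c := ‖x - y‖ ^ (3 + 2*s) with hc
  have hc0 : 0 ≤ c := Real.rpow_nonneg (norm_nonneg _) _
  set a := ‖E * f x - f y‖ with ha
  set b := ‖E * g x - g y‖ with hb
  have ha0 : 0 ≤ a := norm_nonneg _
  have hb0 : 0 ≤ b := norm_nonneg _
  have key : ‖E * (f x + g x) - (f y + g y)‖ ^ 2 ≤ 2 * a ^ 2 + 2 * b ^ 2 := by
    have h1 : E * (f x + g x) - (f y + g y) = (E * f x - f y) + (E * g x - g y) := by ring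
    have h2 : ‖E * (f x + g x) - (f y + g y)‖ ≤ a + b := by
      rw [h1, ha, hb]; exact norm_add_le _ _
    nlinarith [norm_nonneg (E * (f x + g x) - (f y + g y)), sq_nonneg (a - b)]
  have hdiv : ‖E * (f x + g x) - (f y + g y)‖ ^ 2 / c
      ≤ 2 * (a ^ 2 / c) + 2 * (b ^ 2 / c) := by
    rcases hc0.eq_or_lt with h | h
    · simp [← h]
    · rw [← mul_div_assoc, ← mul_div_assoc, ← add_div]
      gcongr
  calc ENNReal.ofReal (‖E * (f x + g x) - (f y + g y)‖ ^ 2 / c)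
      ≤ ENNReal.ofReal (2 * (a ^ 2 / c) + 2 * (b ^ 2 / c)) := ENNReal.ofReal_le_ofReal hdiv
    _ ≤ ENNReal.ofReal (2 * (a ^ 2 / c)) + ENNReal.ofReal (2 * (b ^ 2 / c)) :=
        ENNReal.ofReal_add_le
    _ = 2 * ENNReal.ofReal (a ^ 2 / c) + 2 * ENNReal.ofReal (b ^ 2 / c) := by
        rw [ENNReal.ofReal_mul (by norm_num), ENNReal.ofReal_mul (by norm_num)]
        norm_num

lemma l2sq_eq (u : R3 → ℂ) : l2sq u = eLpNorm u 2 volume ^ 2 := by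
  rw [l2sq, eLpNorm_eq_lintegral_rpow_enorm_toReal two_ne_zero ENNReal.ofNat_ne_top]
  rw [← ENNReal.rpow_natCast _ 2, ← ENNReal.rpow_mul]
  have h2 : ((2:ℝ≥0∞).toReal) = (2:ℝ) := by norm_num
  have h3 : (1/(2:ℝ≥0∞).toReal * (2:ℕ)) = (1:ℝ) := by rw [h2]; norm_num
  rw [h3, ENNReal.rpow_one]
  congr 1
  ext x
  rw [h2, ← ofReal_norm,
    show ((2:ℝ)) = ((2:ℕ):ℝ) by norm_num, ENNReal.rpow_natCast,
    ← ENNReal.ofReal_pow (norm_nonneg _)]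

lemma l2sq_aemeasurable {u : R3 → ℂ} (hu : AEMeasurable u) :
    AEMeasurable (fun x => ENNReal.ofReal (‖u x‖ ^ 2)) volume :=
  ENNReal.measurable_ofReal.comp_aemeasurable
    ((continuous_pow 2).measurable.comp_aemeasurable hu.norm)

lemma magNorm2_add_le (hs : 0 < s) (hA : Continuous A) {f g : R3 → ℂ}
    (hf : AEMeasurable f) (hg : AEMeasurable g) :
    magNorm2 s A (fun x => f x + g x) ≤ 2 * magNorm2 s A f + 2 * magNorm2 s A g := by
  have hl2 : l2sq (fun x => f x + g x) ≤ 2 * l2sq f + 2 * l2sq g := by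
    have hpt : ∀ x, ENNReal.ofReal (‖f x + g x‖ ^ 2)
        ≤ 2 * ENNReal.ofReal (‖f x‖ ^ 2) + 2 * ENNReal.ofReal (‖g x‖ ^ 2) := by
      intro x
      have key : ‖f x + g x‖ ^ 2 ≤ 2 * ‖f x‖ ^ 2 + 2 * ‖g x‖ ^ 2 := by
        nlinarith [norm_add_le (f x) (g x), norm_nonneg (f x + g x), norm_nonneg (f x),
          norm_nonneg (g x), sq_nonneg (‖f x‖ - ‖g x‖)]
      calc ENNReal.ofReal (‖f x + g x‖ ^ 2)
          ≤ ENNReal.ofReal (2 * ‖f x‖ ^ 2 + 2 * ‖g x‖ ^ 2) := ENNReal.ofReal_le_ofReal key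
        _ ≤ ENNReal.ofReal (2 * ‖f x‖ ^ 2) + ENNReal.ofReal (2 * ‖g x‖ ^ 2) :=
            ENNReal.ofReal_add_le
        _ = 2 * ENNReal.ofReal (‖f x‖ ^ 2) + 2 * ENNReal.ofReal (‖g x‖ ^ 2) := by
            rw [ENNReal.ofReal_mul (by norm_num), ENNReal.ofReal_mul (by norm_num)]
            norm_num
    calc l2sq (fun x => f x + g x)
        ≤ ∫⁻ x, (2 * ENNReal.ofReal (‖f x‖ ^ 2) + 2 * ENNReal.ofReal (‖g x‖ ^ 2)) :=
          lintegral_mono hpt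
      _ = 2 * l2sq f + 2 * l2sq g := by
          rw [lintegral_add_left' ((l2sq_aemeasurable hf).const_mul 2),
            lintegral_const_mul'' 2 (l2sq_aemeasurable hf),
            lintegral_const_mul'' 2 (l2sq_aemeasurable hg)]
          rfl
  have hsemi : magSemi2 s A (fun x => f x + g x)
      ≤ 2 * magSemi2 s A f + 2 * magSemi2 s A g := by
    have key : (∫⁻ z : R3 × R3, magKer s A (fun x => f x + g x) z.1 z.2
          ∂((volume : Measure R3).prod volume))
        ≤ ∫⁻ z : R3 × R3, (2 * magKer s A f z.1 z.2 + 2 * magKer s A g z.1 z.2)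
            ∂(volume.prod volume) :=
      lintegral_mono (fun z => magKer_add_le f g z.1 z.2)
    have h2 : (∫⁻ z : R3 × R3, (2 * magKer s A f z.1 z.2 + 2 * magKer s A g z.1 z.2)
          ∂((volume : Measure R3).prod volume))
        = 2 * (∫⁻ z : R3 × R3, magKer s A f z.1 z.2 ∂((volume : Measure R3).prod volume))
          + 2 * ∫⁻ z : R3 × R3, magKer s A g z.1 z.2 ∂((volume : Measure R3).prod volume) := by
      rw [lintegral_add_left' ((magKer_aemeasurable hs hA hf).const_mul 2),
        lintegral_const_mul'' 2 (magKer_aemeasurable hs hA hf),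
        lintegral_const_mul'' 2 (magKer_aemeasurable hs hA hg)]
    rw [magSemi2_eq_prod (u := fun x => f x + g x) hs hA (hf.add hg), magSemi2_eq_prod hs hA hf,
      magSemi2_eq_prod hs hA hg]
    refine le_trans (mul_le_mul_right key _) (le_of_eq ?_)
    rw [h2]
    ring
  calc magNorm2 s A (fun x => f x + g x) = l2sq (fun x => f x + g x)
        + magSemi2 s A (fun x => f x + g x) := rfl
    _ ≤ (2 * l2sq f + 2 * l2sq g) + (2 * magSemi2 s A f + 2 * magSemi2 s A g) :=
        add_le_add hl2 hsemi
    _ = 2 * magNorm2 s A f + 2 * magNorm2 s A g := by unfold magNorm2; ring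

lemma fatou_l2sq {w : ℕ → R3 → ℂ} {g : R3 → ℂ} (hw : ∀ k, AEMeasurable (w k))
    (hconv : ∀ᵐ x, Tendsto (fun k => w k x) atTop (𝓝 (g x))) :
    l2sq g ≤ liminf (fun k => l2sq (w k)) atTop := by
  have step1 : l2sq g ≤ ∫⁻ x, liminf (fun k => ENNReal.ofReal (‖w k x‖ ^ 2)) atTop := by
    apply lintegral_mono_ae
    filter_upwards [hconv] with x hx
    have ht : Tendsto (fun k => ENNReal.ofReal (‖w k x‖ ^ 2)) atTop
        (𝓝 (ENNReal.ofReal (‖g x‖ ^ 2))) :=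
      (ENNReal.continuous_ofReal.tendsto _).comp ((hx.norm).pow 2)
    exact le_of_eq ht.liminf_eq.symm
  exact step1.trans (lintegral_liminf_le' fun k => l2sq_aemeasurable (hw k))

lemma fatou_magSemi2 (hs : 0 < s) (hA : Continuous A) {w : ℕ → R3 → ℂ} {g : R3 → ℂ}
    (hw : ∀ k, AEMeasurable (w k)) (hg : AEMeasurable g)
    (hconv : ∀ᵐ x, Tendsto (fun k => w k x) atTop (𝓝 (g x))) :
    magSemi2 s A g ≤ liminf (fun k => magSemi2 s A (w k)) atTop := by
  have hprod1 : ∀ᵐ z : R3 × R3 ∂((volume : Measure R3).prod volume),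
      Tendsto (fun k => w k z.1) atTop (𝓝 (g z.1)) :=
    Measure.quasiMeasurePreserving_fst.ae hconv
  have hprod2 : ∀ᵐ z : R3 × R3 ∂((volume : Measure R3).prod volume),
      Tendsto (fun k => w k z.2) atTop (𝓝 (g z.2)) :=
    Measure.quasiMeasurePreserving_snd.ae hconv
  have key : (∫⁻ z : R3 × R3, magKer s A g z.1 z.2 ∂((volume : Measure R3).prod volume))
      ≤ liminf (fun k => ∫⁻ z : R3 × R3, magKer s A (w k) z.1 z.2
          ∂((volume : Measure R3).prod volume)) atTop := by
    refine le_trans (lintegral_mono_ae ?_)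
      (lintegral_liminf_le' fun k => magKer_aemeasurable hs hA (hw k))
    filter_upwards [hprod1, hprod2] with z h1 h2
    have ht : Tendsto (fun k => magKer s A (w k) z.1 z.2) atTop
        (𝓝 (magKer s A g z.1 z.2)) := by
      unfold magKer
      exact (ENNReal.continuous_ofReal.tendsto _).comp
        ((((tendsto_const_nhds.mul h1).sub h2).norm.pow 2).div_const _)
    exact le_of_eq ht.liminf_eq.symm
  rw [magSemi2_eq_prod hs hA hg]
  set c := ENNReal.ofReal (cS s / 2) with hc
  set I := fun k => ∫⁻ z : R3 × R3, magKer s A (w k) z.1 z.2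
      ∂((volume : Measure R3).prod volume) with hI
  calc c * ∫⁻ z : R3 × R3, magKer s A g z.1 z.2 ∂((volume : Measure R3).prod volume)
      ≤ c * liminf I atTop := mul_le_mul_right key _
    _ ≤ liminf (fun k => c * I k) atTop := by
        have h := ENNReal.le_liminf_mul (f := atTop) (u := fun _ : ℕ => c) (v := I)
        simpa [Filter.liminf_const, Pi.mul_def] using h
    _ = liminf (fun k => magSemi2 s A (w k)) atTop := by
        congr 1
        funext k
        exact (magSemi2_eq_prod hs hA (hw k)).symm


end aux

/-- `(ℋ, ⟨·,·⟩_{s,A})` is complete: every sequence in `ℋ`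
that is Cauchy for `‖·‖_{s,A}` converges in this norm to some element of `ℋ`. -/
theorem stmt_0 (s : ℝ) (hs : s ∈ Set.Ioo (0:ℝ) 1) (A : R3 → R3) (hA : Continuous A)
    (u : ℕ → R3 → ℂ) (hmeas : ∀ n, AEMeasurable (u n))
    (hfin : ∀ n, magNorm2 s A (u n) ≠ ⊤)
    (hcauchy : ∀ ε > (0:ℝ), ∃ N : ℕ, ∀ m ≥ N, ∀ n ≥ N,
      magNorm2 s A (fun x => u m x - u n x) < ENNReal.ofReal (ε ^ 2)) :
    ∃ v : R3 → ℂ, AEMeasurable v ∧ magNorm2 s A v ≠ ⊤ ∧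
      Tendsto (fun n => magNorm2 s A (fun x => u n x - v x)) atTop (nhds 0) := by
  obtain ⟨hs0, _hs1⟩ := hs
  -- Each `u n` is in L²
  have hl2fin : ∀ n, l2sq (u n) ≠ ⊤ := by
    intro n h
    exact hfin n (by unfold magNorm2; rw [h, top_add])
  have hmemLp : ∀ n, MemLp (u n) 2 (volume : Measure R3) := by
    intro n
    refine ⟨(hmeas n).aestronglyMeasurable, ?_⟩
    have h1 := hl2fin n
    rw [l2sq_eq] at h1
    by_contra h
    push_neg at h
    rw [top_le_iff.1 h] at h1
    exact h1 (by simp)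
  -- The sequence is Cauchy in L²
  set F : ℕ → Lp ℂ 2 (volume : Measure R3) := fun n => (hmemLp n).toLp (u n) with hF
  have hFu : ∀ m n : ℕ, eLpNorm (fun x => u m x - u n x) 2 (volume : Measure R3)
      = eLpNorm (⇑(F m) - ⇑(F n)) 2 volume := by
    intro m n
    exact (eLpNorm_congr_ae (((hmemLp m).coeFn_toLp).sub ((hmemLp n).coeFn_toLp))).symm
  have hFc : CauchySeq F := by
    refine Metric.cauchySeq_iff.2 fun ε hε => ?_
    obtain ⟨N, hN⟩ := hcauchy ε hε
    refine ⟨N, fun m hm n hn => ?_⟩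
    have h1 : l2sq (fun x => u m x - u n x) < ENNReal.ofReal (ε^2) :=
      lt_of_le_of_lt (self_le_add_right _ _) (hN m hm n hn)
    rw [l2sq_eq, ENNReal.ofReal_pow hε.le 2] at h1
    have h2 : eLpNorm (fun x => u m x - u n x) 2 volume < ENNReal.ofReal ε := by
      by_contra hcon
      push_neg at hcon
      exact absurd h1 (not_lt.2 (pow_le_pow_left' hcon 2))
    rw [hFu m n] at h2
    rw [Lp.dist_def]
    exact (ENNReal.lt_ofReal_iff_toReal_lt h2.ne_top).1 h2
  obtain ⟨G, hG⟩ := cauchySeq_tendsto_of_complete hFc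
  set v : R3 → ℂ := ⇑G with hvdef
  have hv : AEMeasurable v := (Lp.aestronglyMeasurable G).aemeasurable
  -- L² convergence of `u n` to `v`
  have hLpconv : Tendsto (fun n => eLpNorm (fun x => u n x - v x) 2 volume) atTop (𝓝 0) := by
    have hdist : Tendsto (fun n => dist (F n) G) atTop (𝓝 0) :=
      tendsto_iff_dist_tendsto_zero.1 hG
    have heq : ∀ n, eLpNorm (fun x => u n x - v x) 2 volume
        = ENNReal.ofReal (dist (F n) G) := by
      intro n
      have hne : eLpNorm (⇑(F n) - ⇑G) 2 volume ≠ ⊤ := by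
        rw [← eLpNorm_congr_ae (Lp.coeFn_sub (F n) G)]
        exact Lp.eLpNorm_ne_top _
      rw [Lp.dist_def, ENNReal.ofReal_toReal hne]
      exact eLpNorm_congr_ae (((hmemLp n).coeFn_toLp).symm.sub EventuallyEq.rfl)
    have h0 : Tendsto (fun n => ENNReal.ofReal (dist (F n) G)) atTop (𝓝 0) := by
      have := (ENNReal.continuous_ofReal.tendsto 0).comp hdist
      simpa [Function.comp_def] using this
    simpa [heq] using h0
  -- convergence in measure and a.e. convergent subsequence
  have hmic : TendstoInMeasure volume u atTop v := by
    refine tendstoInMeasure_of_tendsto_eLpNorm (p := 2) two_ne_zero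
      (fun n => (hmeas n).aestronglyMeasurable) (Lp.aestronglyMeasurable G) ?_
    exact hLpconv
  obtain ⟨ns, hns_mono, hns_ae⟩ := hmic.exists_seq_tendsto_ae
  -- Main estimate via Fatou
  have main : ∀ ε > (0:ℝ), ∃ N, ∀ n ≥ N,
      magNorm2 s A (fun x => u n x - v x) ≤ 2 * ENNReal.ofReal (ε^2) := by
    intro ε hε
    obtain ⟨N, hN⟩ := hcauchy ε hε
    refine ⟨N, fun n hn => ?_⟩
    set w : ℕ → R3 → ℂ := fun k x => u n x - u (ns k) x with hw
    have hwm : ∀ k, AEMeasurable (w k) := fun k => (hmeas n).sub (hmeas (ns k))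
    have hgm : AEMeasurable (fun x => u n x - v x) := (hmeas n).sub hv
    have hconv : ∀ᵐ x, Tendsto (fun k => w k x) atTop (𝓝 (u n x - v x)) := by
      filter_upwards [hns_ae] with x hx
      exact tendsto_const_nhds.sub hx
    have hev : ∀ᶠ k in atTop, magNorm2 s A (w k) ≤ ENNReal.ofReal (ε^2) := by
      filter_upwards [eventually_ge_atTop N] with k hk
      exact (hN n hn (ns k) (le_trans hk hns_mono.le_apply)).le
    have h1 : l2sq (fun x => u n x - v x) ≤ ENNReal.ofReal (ε^2) := by
      refine (fatou_l2sq hwm hconv).trans ?_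
      refine le_trans (liminf_le_liminf (hev.mono fun k hk =>
        le_trans (self_le_add_right _ _) hk)) ?_
      simp [liminf_const]
    have h2 : magSemi2 s A (fun x => u n x - v x) ≤ ENNReal.ofReal (ε^2) := by
      refine (fatou_magSemi2 hs0 hA hwm hgm hconv).trans ?_
      refine le_trans (liminf_le_liminf (hev.mono fun k hk =>
        le_trans (le_add_self) hk)) ?_
      simp [liminf_const]
    calc magNorm2 s A (fun x => u n x - v x)
        = l2sq (fun x => u n x - v x) + magSemi2 s A (fun x => u n x - v x) := rfl
      _ ≤ ENNReal.ofReal (ε^2) + ENNReal.ofReal (ε^2) := add_le_add h1 h2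
      _ = 2 * ENNReal.ofReal (ε^2) := (two_mul _).symm
  -- Finiteness of the limit's norm
  have hvfin : magNorm2 s A v ≠ ⊤ := by
    obtain ⟨N, hN⟩ := main 1 one_pos
    have h1 : magNorm2 s A (fun x => u N x - v x) ≤ 2 * ENNReal.ofReal 1 := by
      simpa using hN N le_rfl
    have key := magNorm2_add_le hs0 hA (f := fun x => - (u N x - v x)) (g := u N)
      ((hmeas N).sub hv).neg (hmeas N)
    have hfe : (fun x => - (u N x - v x) + u N x) = v := by funext x; ring
    rw [hfe, magNorm2_neg] at key
    intro htop
    rw [htop] at key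
    have hne : (2:ℝ≥0∞) * magNorm2 s A (fun x => u N x - v x)
        + 2 * magNorm2 s A (u N) ≠ ⊤ := by
      refine ENNReal.add_ne_top.2 ⟨ENNReal.mul_ne_top (by norm_num) ?_,
        ENNReal.mul_ne_top (by norm_num) (hfin N)⟩
      exact ne_top_of_le_ne_top (by simp) h1
    exact hne (top_le_iff.1 key)
  refine ⟨v, hv, hvfin, ?_⟩
  rw [ENNReal.tendsto_atTop_zero]
  intro δ hδ
  obtain ⟨q, hq0, h0q, hqδ⟩ := ENNReal.lt_iff_exists_real_btwn.1 hδ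
  have hqpos : 0 < q := by
    by_contra h
    push_neg at h
    simp [ENNReal.ofReal_eq_zero.2 h] at h0q
  set ε : ℝ := Real.sqrt (q/2) with hε
  have hεpos : 0 < ε := Real.sqrt_pos.2 (by linarith)
  obtain ⟨N, hN⟩ := main ε hεpos
  refine ⟨N, fun n hn => ?_⟩
  have hsq : ε^2 = q/2 := Real.sq_sqrt (by linarith)
  calc magNorm2 s A (fun x => u n x - v x) ≤ 2 * ENNReal.ofReal (ε^2) := hN n hn
    _ = ENNReal.ofReal q := by
        rw [hsq, show (2:ℝ≥0∞) = ENNReal.ofReal 2 by norm_num,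
          ← ENNReal.ofReal_mul (by norm_num : (0:ℝ) ≤ 2)]
        congr 1
        ring
    _ ≤ δ := hqδ.le
end
end

section
/- Let A : ℝ³ → ℝ³ be of class C², let γ ∈ [0,1], and let u : ℝ³ → ℂ be of class C¹ with locally γ-Hölder continuous gradient (u ∈ C^{1,γ}_loc(ℝ³,ℂ)). For x, y ∈ ℝ³ set u_x(y) = e^{i(x−y)·A((x+y)/2)}·u(y). Then for every compact set K ⊂ ℝ³ and every R > 0 there exists a constant C > 0 (depending on R, K, A, u) such that |u_x(x+y) + u_x(x−y) − 2u_x(x)| ≤ C·|y|^{1+γ} for every x ∈ K and every y ∈ ℝ³ with |y| ≤ R. -/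
noncomputable section

open MeasureTheory Filter Topology
open scoped ENNReal

/-- The magnetic twisted function `u_x(y) = e^{i(x-y)·A((x+y)/2)} u(y)`. -/
def uTwist (A : R3 → R3) (u : R3 → ℂ) (x y : R3) : ℂ :=
  Complex.exp ((phase A x y : ℂ) * Complex.I) * u y

lemma secondDiff_aux {F : R3 → ℂ} (hF : Differentiable ℝ F) (x y : R3) {C : ℝ}
    (hC : ∀ a ∈ Metric.closedBall x ‖y‖, ‖fderiv ℝ F a - fderiv ℝ F x‖ ≤ C) :
    ‖F (x + y) + F (x - y) - 2 * F x‖ ≤ 2 * (C * ‖y‖) := by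
  have hconv : Convex ℝ (Metric.closedBall x ‖y‖) := convex_closedBall _ _
  have hd : ∀ a ∈ Metric.closedBall x ‖y‖, DifferentiableAt ℝ F a := fun a _ => hF a
  have hxs : x ∈ Metric.closedBall x ‖y‖ := Metric.mem_closedBall_self (norm_nonneg y)
  have hy1 : x + y ∈ Metric.closedBall x ‖y‖ := by
    simp [Metric.mem_closedBall, dist_eq_norm]
  have hy2 : x - y ∈ Metric.closedBall x ‖y‖ := by
    simp [Metric.mem_closedBall, dist_eq_norm]
  have h1 := hconv.norm_image_sub_le_of_norm_fderiv_le' hd hC hxs hy1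
  have h2 := hconv.norm_image_sub_le_of_norm_fderiv_le' hd hC hxs hy2
  have e1 : x + y - x = y := by abel
  have e2 : x - y - x = -y := by abel
  rw [e1] at h1
  rw [e2, norm_neg] at h2
  have hsum : F (x + y) + F (x - y) - 2 * F x
      = (F (x + y) - F x - fderiv ℝ F x y) + (F (x - y) - F x - fderiv ℝ F x (-y)) := by
    rw [map_neg]; ring
  rw [hsum]
  calc ‖_ + _‖ ≤ ‖F (x + y) - F x - fderiv ℝ F x y‖ + ‖F (x - y) - F x - fderiv ℝ F x (-y)‖ :=
        norm_add_le _ _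
    _ ≤ C * ‖y‖ + C * ‖y‖ := add_le_add h1 h2
    _ = 2 * (C * ‖y‖) := by ring


/-- second-difference estimate for the twisted function. -/
theorem stmt_2 (γ : ℝ) (hγ : γ ∈ Set.Icc (0:ℝ) 1) (A : R3 → R3) (hA : ContDiff ℝ 2 A)
    (u : R3 → ℂ) (hu : ContDiff ℝ 1 u)
    (huh : ∀ K : Set R3, IsCompact K → ∃ C ≥ (0:ℝ), ∀ x ∈ K, ∀ y ∈ K,
      ‖fderiv ℝ u x - fderiv ℝ u y‖ ≤ C * ‖x - y‖ ^ γ) :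
    ∀ K : Set R3, IsCompact K → ∀ R > (0:ℝ), ∃ C > (0:ℝ), ∀ x ∈ K, ∀ y : R3, ‖y‖ ≤ R →
      ‖uTwist A u x (x + y) + uTwist A u x (x - y) - 2 * uTwist A u x x‖
        ≤ C * ‖y‖ ^ (1 + γ) := by
  intro K hK R hR
  -- the Hölder constant for `u` on the thickening of `K`
  have hK' : IsCompact (Metric.cthickening R K) := hK.cthickening
  obtain ⟨Cu, hCu0, hCu⟩ := huh _ hK'
  -- the phase exponential as a jointly smooth function
  set P : R3 × R3 → ℂ :=
    fun p => Complex.exp ((phase A p.1 (p.1 + p.2) : ℂ) * Complex.I) with hPdef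
  have hphase : ContDiff ℝ 2 (fun p : R3 × R3 => phase A p.1 (p.1 + p.2)) := by
    have h1 : ContDiff ℝ 2 (fun p : R3 × R3 => p.1 - (p.1 + p.2)) :=
      contDiff_fst.sub (contDiff_fst.add contDiff_snd)
    have h2 : ContDiff ℝ 2 (fun p : R3 × R3 => A ((2:ℝ)⁻¹ • (p.1 + (p.1 + p.2)))) :=
      hA.comp ((contDiff_fst.add (contDiff_fst.add contDiff_snd)).const_smul _)
    unfold phase
    exact h1.inner ℝ h2
  have hP : ContDiff ℝ 2 P :=
    ((Complex.ofRealCLM.contDiff.comp hphase).mul contDiff_const).cexp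
  have hPdiff : Differentiable ℝ P := hP.differentiable (by norm_num)
  set Q : R3 × R3 → (R3 × R3) →L[ℝ] ℂ := fderiv ℝ P with hQdef
  have hQ : ContDiff ℝ 1 Q := hP.fderiv_right (by norm_num)
  -- a big compact convex set containing all points `(x, a)` with `x ∈ K`, `‖a‖ ≤ R`
  obtain ⟨M₀, hM₀⟩ := hK.isBounded.subset_closedBall 0
  set M : ℝ := max M₀ 0 + R with hMdef
  set S : Set (R3 × R3) := Metric.closedBall 0 M with hSdef
  have hScomp : IsCompact S := isCompact_closedBall _ _
  have hSconv : Convex ℝ S := convex_closedBall _ _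
  have hmemS : ∀ x ∈ K, ∀ a : R3, ‖a‖ ≤ R → ((x, a) : R3 × R3) ∈ S := by
    intro x hx a ha
    have hxM : ‖x‖ ≤ max M₀ 0 := by
      have := hM₀ hx
      rw [Metric.mem_closedBall, dist_zero_right] at this
      exact le_trans this (le_max_left _ _)
    rw [hSdef, Metric.mem_closedBall, dist_zero_right, Prod.norm_def]
    have h0 : (0:ℝ) ≤ max M₀ 0 := le_max_right _ _
    exact max_le (by simp only; linarith) (by simp only; linarith)
  -- bounds and Lipschitz constants on `S`
  obtain ⟨B1, hB1⟩ := hScomp.exists_bound_of_continuousOn (hQ.continuous.continuousOn)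
  obtain ⟨B2, hB2⟩ :=
    hScomp.exists_bound_of_continuousOn ((hQ.continuous_fderiv (by norm_num)).continuousOn)
  have hPlip : ∀ p ∈ S, ∀ q ∈ S, ‖P p - P q‖ ≤ max B1 0 * ‖p - q‖ := by
    intro p hp q hq
    exact hSconv.norm_image_sub_le_of_norm_fderiv_le (fun a _ => hPdiff a)
      (fun a haS => le_trans (hB1 a haS) (le_max_left B1 0)) hq hp
  have hQlip : ∀ p ∈ S, ∀ q ∈ S, ‖Q p - Q q‖ ≤ max B2 0 * ‖p - q‖ := by
    intro p hp q hq
    exact hSconv.norm_image_sub_le_of_norm_fderiv_le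
      (fun a _ => (hQ.differentiable (by norm_num)) a)
      (fun a haS => le_trans (hB2 a haS) (le_max_left B2 0)) hq hp
  -- bounds for `u`
  obtain ⟨Mu, hMu⟩ := hK.exists_bound_of_continuousOn hu.continuous.continuousOn
  obtain ⟨Lu, hLu⟩ :=
    hK'.exists_bound_of_continuousOn ((hu.continuous_fderiv (by norm_num)).continuousOn)
  -- the final constant
  set Rg : ℝ := R ^ (1 - γ) with hRgdef
  have hRg0 : 0 ≤ Rg := Real.rpow_nonneg (le_of_lt hR) _
  set C : ℝ := 2 * Cu + 2 * max Mu 0 * max B2 0 * Rg + 2 * max B1 0 * max Lu 0 * Rg + 1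
    with hCdef
  have hCpos : 0 < C := by
    have h1 : 0 ≤ 2 * max Mu 0 * max B2 0 * Rg := by positivity
    have h2 : 0 ≤ 2 * max B1 0 * max Lu 0 * Rg := by positivity
    rw [hCdef]; linarith
  refine ⟨C, hCpos, ?_⟩
  intro x hx y hy
  by_cases hy0 : y = 0
  · have h0 : uTwist A u x (x + y) + uTwist A u x (x - y) - 2 * uTwist A u x x = 0 := by
      rw [hy0, add_zero, sub_zero]; ring
    rw [h0, hy0, norm_zero, norm_zero, Real.zero_rpow (by linarith [hγ.1] : (1:ℝ) + γ ≠ 0),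
      mul_zero]
  have hypos : (0:ℝ) < ‖y‖ := norm_pos_iff.mpr hy0
  -- membership facts
  have hxK' : x ∈ Metric.cthickening R K := Metric.self_subset_cthickening K hx
  have hballK' : Metric.closedBall x ‖y‖ ⊆ Metric.cthickening R K :=
    (Metric.closedBall_subset_closedBall hy).trans (Metric.closedBall_subset_cthickening hx R)
  -- second difference of `u`
  have hSD_u : ‖u (x + y) + u (x - y) - 2 * u x‖ ≤ 2 * ((Cu * ‖y‖ ^ γ) * ‖y‖) := by
    apply secondDiff_aux (hu.differentiable (by norm_num)) x y
    intro a ha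
    refine le_trans (hCu a (hballK' ha) x hxK') ?_
    apply mul_le_mul_of_nonneg_left ?_ hCu0
    apply Real.rpow_le_rpow (norm_nonneg _) ?_ hγ.1
    rw [Metric.mem_closedBall, dist_eq_norm] at ha
    exact ha
  -- second difference of the phase exponential
  set J : R3 →L[ℝ] R3 × R3 := (0 : R3 →L[ℝ] R3).prod (ContinuousLinearMap.id ℝ R3) with hJdef
  have hJnorm : ∀ v : R3, ‖J v‖ = ‖v‖ := by
    intro v
    rw [hJdef]
    simp [Prod.norm_def, ContinuousLinearMap.prod_apply]
  have hJle : ∀ T : (R3 × R3) →L[ℝ] ℂ, ‖T.comp J‖ ≤ ‖T‖ := by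
    intro T
    refine ContinuousLinearMap.opNorm_le_bound _ (norm_nonneg T) fun v => ?_
    calc ‖(T.comp J) v‖ = ‖T (J v)‖ := rfl
      _ ≤ ‖T‖ * ‖J v‖ := T.le_opNorm _
      _ = ‖T‖ * ‖v‖ := by rw [hJnorm]
  have hFd : ∀ a : R3, HasFDerivAt (fun a => P (x, a)) ((Q (x, a)).comp J) a := by
    intro a
    have h1 : HasFDerivAt (fun a : R3 => ((x, a) : R3 × R3)) J a :=
      HasFDerivAt.prodMk (hasFDerivAt_const x a) (hasFDerivAt_id a)
    exact ((hPdiff (x, a)).hasFDerivAt).comp a h1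
  have hFdiff : Differentiable ℝ (fun a => P (x, a)) := fun a => (hFd a).differentiableAt
  have hmemS' : ∀ a : R3, ‖a‖ ≤ ‖y‖ → ((x, a) : R3 × R3) ∈ S :=
    fun a ha => hmemS x hx a (le_trans ha hy)
  have hSD_P : ‖P (x, y) + P (x, -y) - 2 * P (x, 0)‖ ≤ 2 * ((max B2 0 * ‖y‖) * ‖y‖) := by
    have hbd : ∀ a ∈ Metric.closedBall (0:R3) ‖y‖,
        ‖fderiv ℝ (fun a => P (x, a)) a - fderiv ℝ (fun a => P (x, a)) 0‖
          ≤ max B2 0 * ‖y‖ := by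
      intro a ha
      rw [Metric.mem_closedBall, dist_zero_right] at ha
      rw [(hFd a).fderiv, (hFd 0).fderiv, ← ContinuousLinearMap.sub_comp]
      refine le_trans (hJle _) ?_
      refine le_trans (hQlip _ (hmemS' a ha) _ (hmemS' 0 (by simp [le_of_lt hypos]))) ?_
      have : ((x, a) : R3 × R3) - (x, 0) = (0, a) := by
        simp [Prod.ext_iff]
      rw [this]
      have hna : ‖((0 : R3), a)‖ = ‖a‖ := by simp [Prod.norm_def]
      rw [hna]
      exact mul_le_mul_of_nonneg_left ha (le_max_right _ _)
    have := secondDiff_aux hFdiff 0 y hbd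
    simpa using this
  -- Lipschitz estimates for the cross terms
  have hcrossP : ∀ a : R3, ‖a‖ ≤ ‖y‖ → ‖P (x, a) - P (x, 0)‖ ≤ max B1 0 * ‖y‖ := by
    intro a ha
    refine le_trans (hPlip _ (hmemS' a ha) _ (hmemS' 0 (by simp [le_of_lt hypos]))) ?_
    have h1 : ((x, a) : R3 × R3) - (x, 0) = (0, a) := by simp [Prod.ext_iff]
    rw [h1]
    have hna : ‖((0 : R3), a)‖ = ‖a‖ := by simp [Prod.norm_def]
    rw [hna]
    exact mul_le_mul_of_nonneg_left ha (le_max_right _ _)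
  have hcrossu : ∀ a : R3, ‖a‖ ≤ ‖y‖ → ‖u (x + a) - u x‖ ≤ max Lu 0 * ‖y‖ := by
    intro a ha
    have hconv : Convex ℝ (Metric.closedBall x ‖y‖) := convex_closedBall _ _
    have hmem1 : x + a ∈ Metric.closedBall x ‖y‖ := by
      rw [Metric.mem_closedBall, dist_eq_norm]
      simpa using ha
    have := hconv.norm_image_sub_le_of_norm_fderiv_le
      (fun b _ => (hu.differentiable (by norm_num)) b)
      (fun b hb => le_trans (hLu b (hballK' hb)) (le_max_left Lu 0))
      (Metric.mem_closedBall_self (norm_nonneg y)) hmem1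
    refine le_trans this ?_
    have : x + a - x = a := by abel
    rw [this]
    exact mul_le_mul_of_nonneg_left ha (le_max_right _ _)
  -- the algebraic identity
  have e1 : uTwist A u x (x + y) = P (x, y) * u (x + y) := rfl
  have e2 : uTwist A u x (x - y) = P (x, -y) * u (x - y) := by
    rw [hPdef, uTwist]
    simp [sub_eq_add_neg]
  have e3 : uTwist A u x x = P (x, 0) * u x := by
    rw [hPdef, uTwist]
    simp
  have hid : uTwist A u x (x + y) + uTwist A u x (x - y) - 2 * uTwist A u x x
      = P (x, 0) * (u (x + y) + u (x - y) - 2 * u x)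
        + u x * (P (x, y) + P (x, -y) - 2 * P (x, 0))
        + (P (x, y) - P (x, 0)) * (u (x + y) - u x)
        + (P (x, -y) - P (x, 0)) * (u (x - y) - u x) := by
    rw [e1, e2, e3]; ring
  have hP0 : ‖P (x, 0)‖ = 1 := by
    rw [hPdef]
    simp only
    rw [Complex.norm_exp_ofReal_mul_I]
  -- power manipulations
  have hT1 : ‖y‖ ^ γ * ‖y‖ = ‖y‖ ^ (1 + γ) := by
    rw [Real.rpow_add hypos, Real.rpow_one]; ring
  have hT2 : ‖y‖ * ‖y‖ ≤ Rg * ‖y‖ ^ (1 + γ) := by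
    have heq : ‖y‖ * ‖y‖ = ‖y‖ ^ (1 - γ) * ‖y‖ ^ (1 + γ) := by
      rw [← Real.rpow_add hypos]
      rw [show (1 - γ) + (1 + γ) = (2:ℝ) by ring]
      rw [show (2:ℝ) = ((2:ℕ):ℝ) by norm_num, Real.rpow_natCast]
      ring
    rw [heq, hRgdef]
    apply mul_le_mul_of_nonneg_right ?_ (Real.rpow_nonneg (norm_nonneg y) _)
    exact Real.rpow_le_rpow (norm_nonneg y) hy (by linarith [hγ.2])
  have ht0 : 0 ≤ ‖y‖ ^ (1 + γ) := Real.rpow_nonneg (norm_nonneg y) _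
  -- putting everything together
  rw [hid]
  have step1 : ‖P (x, 0) * (u (x + y) + u (x - y) - 2 * u x)
        + u x * (P (x, y) + P (x, -y) - 2 * P (x, 0))
        + (P (x, y) - P (x, 0)) * (u (x + y) - u x)
        + (P (x, -y) - P (x, 0)) * (u (x - y) - u x)‖
      ≤ ‖P (x, 0)‖ * ‖u (x + y) + u (x - y) - 2 * u x‖
        + ‖u x‖ * ‖P (x, y) + P (x, -y) - 2 * P (x, 0)‖
        + ‖P (x, y) - P (x, 0)‖ * ‖u (x + y) - u x‖
        + ‖P (x, -y) - P (x, 0)‖ * ‖u (x - y) - u x‖ := by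
    refine le_trans (norm_add_le _ _) (add_le_add (le_trans (norm_add_le _ _)
      (add_le_add (le_trans (norm_add_le _ _) (add_le_add ?_ ?_)) ?_)) ?_) <;>
      rw [norm_mul]
  refine le_trans step1 ?_
  have b1 : ‖P (x, 0)‖ * ‖u (x + y) + u (x - y) - 2 * u x‖ ≤ 2 * Cu * ‖y‖ ^ (1 + γ) := by
    rw [hP0, one_mul]
    refine le_trans hSD_u ?_
    rw [show 2 * ((Cu * ‖y‖ ^ γ) * ‖y‖) = 2 * Cu * (‖y‖ ^ γ * ‖y‖) by ring, hT1]
  have b2 : ‖u x‖ * ‖P (x, y) + P (x, -y) - 2 * P (x, 0)‖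
      ≤ 2 * max Mu 0 * max B2 0 * Rg * ‖y‖ ^ (1 + γ) := by
    have hux : ‖u x‖ ≤ max Mu 0 := le_trans (hMu x hx) (le_max_left _ _)
    calc ‖u x‖ * ‖P (x, y) + P (x, -y) - 2 * P (x, 0)‖
        ≤ max Mu 0 * (2 * ((max B2 0 * ‖y‖) * ‖y‖)) := by
          apply mul_le_mul hux hSD_P (norm_nonneg _) (le_max_right _ _)
      _ = 2 * max Mu 0 * max B2 0 * (‖y‖ * ‖y‖) := by ring
      _ ≤ 2 * max Mu 0 * max B2 0 * (Rg * ‖y‖ ^ (1 + γ)) := by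
          apply mul_le_mul_of_nonneg_left hT2 (by positivity)
      _ = 2 * max Mu 0 * max B2 0 * Rg * ‖y‖ ^ (1 + γ) := by ring
  have b3 : ‖P (x, y) - P (x, 0)‖ * ‖u (x + y) - u x‖
      ≤ max B1 0 * max Lu 0 * Rg * ‖y‖ ^ (1 + γ) := by
    calc ‖P (x, y) - P (x, 0)‖ * ‖u (x + y) - u x‖
        ≤ (max B1 0 * ‖y‖) * (max Lu 0 * ‖y‖) := by
          apply mul_le_mul (hcrossP y le_rfl) (hcrossu y le_rfl) (norm_nonneg _)
            (by positivity)
      _ = max B1 0 * max Lu 0 * (‖y‖ * ‖y‖) := by ring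
      _ ≤ max B1 0 * max Lu 0 * (Rg * ‖y‖ ^ (1 + γ)) := by
          apply mul_le_mul_of_nonneg_left hT2 (by positivity)
      _ = max B1 0 * max Lu 0 * Rg * ‖y‖ ^ (1 + γ) := by ring
  have b4 : ‖P (x, -y) - P (x, 0)‖ * ‖u (x - y) - u x‖
      ≤ max B1 0 * max Lu 0 * Rg * ‖y‖ ^ (1 + γ) := by
    have hny : ‖-y‖ ≤ ‖y‖ := by rw [norm_neg]
    have hcu : ‖u (x - y) - u x‖ ≤ max Lu 0 * ‖y‖ := by
      have := hcrossu (-y) hny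
      rw [← sub_eq_add_neg] at this
      exact this
    calc ‖P (x, -y) - P (x, 0)‖ * ‖u (x - y) - u x‖
        ≤ (max B1 0 * ‖y‖) * (max Lu 0 * ‖y‖) := by
          apply mul_le_mul (hcrossP (-y) hny) hcu (norm_nonneg _) (by positivity)
      _ = max B1 0 * max Lu 0 * (‖y‖ * ‖y‖) := by ring
      _ ≤ max B1 0 * max Lu 0 * (Rg * ‖y‖ ^ (1 + γ)) := by
          apply mul_le_mul_of_nonneg_left hT2 (by positivity)
      _ = max B1 0 * max Lu 0 * Rg * ‖y‖ ^ (1 + γ) := by ring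
  calc _ ≤ 2 * Cu * ‖y‖ ^ (1 + γ) + 2 * max Mu 0 * max B2 0 * Rg * ‖y‖ ^ (1 + γ)
        + max B1 0 * max Lu 0 * Rg * ‖y‖ ^ (1 + γ)
        + max B1 0 * max Lu 0 * Rg * ‖y‖ ^ (1 + γ) :=
      add_le_add (add_le_add (add_le_add b1 b2) b3) b4
    _ = (2 * Cu + 2 * max Mu 0 * max B2 0 * Rg + 2 * max B1 0 * max Lu 0 * Rg)
        * ‖y‖ ^ (1 + γ) := by ring
    _ ≤ C * ‖y‖ ^ (1 + γ) := by
      apply mul_le_mul_of_nonneg_right ?_ ht0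
      rw [hCdef]; linarith
end
end

section
/- (Diamagnetic inequality.) Let s ∈ (0,1) and A : ℝ³ → ℝ³. For every measurable u : ℝ³ → ℂ one has ∬_{ℝ³×ℝ³} ||u(x)| − |u(y)||²/|x−y|^{3+2s} dx dy ≤ ∬_{ℝ³×ℝ³} |e^{−i(x−y)·A((x+y)/2)}u(x) − u(y)|²/|x−y|^{3+2s} dx dy; consequently ‖|u|‖_s ≤ ‖u‖_{s,A}, and if ‖u‖_{s,A} < ∞ then |u| ∈ H^s(ℝ³). -/
noncomputable section

open MeasureTheory Filter Topology
open scoped ENNReal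

lemma key_ineq (s : ℝ) (A : R3 → R3) (u : R3 → ℂ) (x y : R3) :
    ENNReal.ofReal ((‖u x‖ - ‖u y‖) ^ 2 / ‖x - y‖ ^ (3 + 2*s)) ≤ magKer s A u x y := by
  apply ENNReal.ofReal_le_ofReal
  have hden : (0:ℝ) ≤ ‖x - y‖ ^ (3 + 2*s) := Real.rpow_nonneg (norm_nonneg _) _
  have hnorm : ‖Complex.exp (-(phase A x y : ℂ) * Complex.I) * u x‖ = ‖u x‖ := by
    rw [norm_mul, Complex.norm_exp]
    simp
  have hnum : (‖u x‖ - ‖u y‖) ^ 2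
      ≤ ‖Complex.exp (-(phase A x y : ℂ) * Complex.I) * u x - u y‖ ^ 2 := by
    rw [← sq_abs (‖u x‖ - ‖u y‖)]
    apply pow_le_pow_left₀ (abs_nonneg _)
    rw [← hnorm]
    exact abs_norm_sub_norm_le _ _
  rcases eq_or_lt_of_le hden with h | h
  · rw [← h, div_zero, div_zero]
  · gcongr

lemma magKer_abs (s : ℝ) (u : R3 → ℂ) (x y : R3) :
    magKer s (fun _ => 0) (fun x => (‖u x‖ : ℂ)) x y
      = ENNReal.ofReal ((‖u x‖ - ‖u y‖) ^ 2 / ‖x - y‖ ^ (3 + 2*s)) := by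
  unfold magKer phase
  congr 2
  have h0 : (inner ℝ (x - y) ((fun _ : R3 => (0:R3)) ((2:ℝ)⁻¹ • (x + y))) : ℝ) = 0 := by
    simp
  rw [h0]
  simp only [Complex.ofReal_zero, neg_zero, zero_mul, Complex.exp_zero, one_mul]
  rw [← Complex.ofReal_sub, Complex.norm_real, Real.norm_eq_abs, sq_abs]

/-- Diamagnetic inequality. -/
theorem stmt_4 (s : ℝ) (hs : s ∈ Set.Ioo (0:ℝ) 1) (A : R3 → R3)
    (u : R3 → ℂ) (hm : AEMeasurable u) :
    (∫⁻ x, ∫⁻ y, ENNReal.ofReal ((‖u x‖ - ‖u y‖) ^ 2 / ‖x - y‖ ^ (3 + 2*s)))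
        ≤ (∫⁻ x, ∫⁻ y, magKer s A u x y) ∧
      magNorm2 s (fun _ => 0) (fun x => (‖u x‖ : ℂ)) ≤ magNorm2 s A u ∧
      (magNorm2 s A u ≠ ⊤ → magNorm2 s (fun _ => 0) (fun x => (‖u x‖ : ℂ)) ≠ ⊤) := by
  have h1 : (∫⁻ x, ∫⁻ y, ENNReal.ofReal ((‖u x‖ - ‖u y‖) ^ 2 / ‖x - y‖ ^ (3 + 2*s)))
      ≤ ∫⁻ x, ∫⁻ y, magKer s A u x y := by
    refine lintegral_mono fun x => lintegral_mono fun y => key_ineq s A u x y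
  have h2 : magNorm2 s (fun _ => 0) (fun x => (‖u x‖ : ℂ)) ≤ magNorm2 s A u := by
    unfold magNorm2
    apply add_le_add
    · unfold l2sq
      refine le_of_eq (lintegral_congr fun x => ?_)
      rw [Complex.norm_real, norm_norm]
    · unfold magSemi2
      apply mul_le_mul_right
      calc (∫⁻ x, ∫⁻ y, magKer s (fun _ => 0) (fun x => (‖u x‖ : ℂ)) x y)
          = ∫⁻ x, ∫⁻ y, ENNReal.ofReal ((‖u x‖ - ‖u y‖) ^ 2 / ‖x - y‖ ^ (3 + 2*s)) := by
            exact lintegral_congr fun x => lintegral_congr fun y => magKer_abs s u x y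
        _ ≤ _ := h1
  exact ⟨h1, h2, fun h => fun hc => h (top_le_iff.mp (hc ▸ h2))⟩
end
end

section
/- (Local embedding.) Let s ∈ (0,1) and let A : ℝ³ → ℝ³ be continuous. For every compact set K ⊂ ℝ³ there exists a constant C > 0 (depending on s, A, K) such that for every measurable u : ℝ³ → ℂ with ‖u‖_{s,A} < ∞: ∫_K |u(x)|² dx + (c_s/2)·∬_{K×K} |u(x) − u(y)|²/|x−y|^{3+2s} dx dy ≤ C·‖u‖²_{s,A}. -/
noncomputable section

open MeasureTheory Filter Topology
open scoped ENNReal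

lemma norm_cexp_real_mul_I_sub_one_le (t : ℝ) :
    ‖Complex.exp ((t:ℂ) * Complex.I) - 1‖ ≤ |t| := by
  have key : ∀ x ∈ (Set.univ : Set ℝ), HasDerivWithinAt (fun r : ℝ => Complex.exp ((r:ℂ) * Complex.I))
      (Complex.exp ((x:ℂ) * Complex.I) * Complex.I) Set.univ x := by
    intro x _
    have h0 : HasDerivAt (fun r : ℝ => (r:ℂ)) 1 x := by
      simpa using (hasDerivAt_id x).ofReal_comp
    have h1 : HasDerivAt (fun r : ℝ => (r:ℂ) * Complex.I) Complex.I x := by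
      simpa using h0.mul_const Complex.I
    exact h1.cexp.hasDerivWithinAt
  have hb : ∀ x ∈ (Set.univ : Set ℝ), ‖Complex.exp ((x:ℂ) * Complex.I) * Complex.I‖ ≤ 1 := by
    intro x _
    simp [Complex.norm_exp_ofReal_mul_I]
  have := Convex.norm_image_sub_le_of_norm_hasDerivWithin_le key hb convex_univ
    (Set.mem_univ 0) (Set.mem_univ t)
  simpa [Real.norm_eq_abs] using this

lemma lintegral_closedBall_rpow_neg_lt_top {a R : ℝ} (ha0 : 0 < a) (ha3 : a < 3) :
    ∫⁻ z in Metric.closedBall (0:R3) R, ENNReal.ofReal (‖z‖ ^ (-a)) < ⊤ := by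
  set μ := (volume : Measure R3).restrict (Metric.closedBall (0:R3) R) with hμ
  have hmeas : Measurable fun z : R3 => ‖z‖ ^ (-a) := by fun_prop
  have h_pos : ∀ z : R3, 0 ≤ ‖z‖ ^ (-a) := fun z => Real.rpow_nonneg (norm_nonneg z) _
  rw [show (∫⁻ z in Metric.closedBall (0:R3) R, ENNReal.ofReal (‖z‖ ^ (-a)))
      = ∫⁻ z, ENNReal.ofReal (‖z‖ ^ (-a)) ∂μ from rfl,
    lintegral_eq_lintegral_meas_le μ (Filter.Eventually.of_forall h_pos) hmeas.aemeasurable]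
  have hsub : ∀ t : ℝ, 0 < t →
      {z : R3 | t ≤ ‖z‖ ^ (-a)} ⊆ Metric.closedBall 0 (t ^ (-a⁻¹)) := by
    intro t ht z hz
    simp only [Set.mem_setOf_eq] at hz
    have hz0 : (0:ℝ) < ‖z‖ := by
      rcases eq_or_lt_of_le (norm_nonneg z) with h | h
      · exfalso
        rw [← h, Real.zero_rpow (neg_ne_zero.mpr ha0.ne')] at hz
        · linarith
      · exact h
    have h2 := Real.rpow_le_rpow_of_nonpos ht hz
      (by simp [inv_nonneg, ha0.le] : -a⁻¹ ≤ 0)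
    rw [← Real.rpow_mul (norm_nonneg z), neg_mul_neg, mul_inv_cancel₀ ha0.ne',
      Real.rpow_one] at h2
    simpa [Metric.mem_closedBall, dist_zero_right] using h2
  calc (∫⁻ t in Set.Ioi (0:ℝ), μ {z | t ≤ ‖z‖ ^ (-a)})
      ≤ ∫⁻ t in Set.Ioc (0:ℝ) 1 ∪ Set.Ioi 1, μ {z | t ≤ ‖z‖ ^ (-a)} :=
        lintegral_mono_set Set.Ioi_subset_Ioc_union_Ioi
    _ ≤ (∫⁻ t in Set.Ioc (0:ℝ) 1, μ {z | t ≤ ‖z‖ ^ (-a)})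
        + ∫⁻ t in Set.Ioi (1:ℝ), μ {z | t ≤ ‖z‖ ^ (-a)} := lintegral_union_le _ _ _
    _ < ⊤ := by
        rw [ENNReal.add_lt_top]
        constructor
        · calc (∫⁻ t in Set.Ioc (0:ℝ) 1, μ {z | t ≤ ‖z‖ ^ (-a)})
              ≤ ∫⁻ _t in Set.Ioc (0:ℝ) 1, volume (Metric.closedBall (0:R3) R) := by
                refine setLIntegral_mono' measurableSet_Ioc fun t _ => ?_
                calc μ {z | t ≤ ‖z‖ ^ (-a)} ≤ μ Set.univ := measure_mono (Set.subset_univ _)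
                  _ = volume (Metric.closedBall (0:R3) R) := by
                      simp [hμ]
            _ = volume (Metric.closedBall (0:R3) R) * volume (Set.Ioc (0:ℝ) 1) :=
                setLIntegral_const _ _
            _ < ⊤ := ENNReal.mul_lt_top measure_closedBall_lt_top (by simp)
        · have hlt : -(3/a) < -1 := by
            rw [neg_lt_neg_iff]
            exact (one_lt_div ha0).mpr ha3
          calc (∫⁻ t in Set.Ioi (1:ℝ), μ {z | t ≤ ‖z‖ ^ (-a)})
              ≤ ∫⁻ t in Set.Ioi (1:ℝ),
                  ENNReal.ofReal (t ^ (-(3/a))) * volume (Metric.ball (0:R3) 1) := by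
                refine setLIntegral_mono' measurableSet_Ioi fun t ht => ?_
                have ht0 : (0:ℝ) < t := lt_trans one_pos ht
                have h1 : μ {z | t ≤ ‖z‖ ^ (-a)}
                    ≤ volume (Metric.closedBall (0:R3) (t ^ (-a⁻¹))) := by
                  rw [hμ, Measure.restrict_apply' measurableSet_closedBall]
                  exact measure_mono (Set.inter_subset_left.trans (hsub t ht0))
                refine h1.trans (le_of_eq ?_)
                rw [Measure.addHaar_closedBall _ _ (Real.rpow_nonneg ht0.le _)]
                congr 1
                rw [finrank_euclideanSpace_fin, ← Real.rpow_natCast (t ^ (-a⁻¹)) 3,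
                  ← Real.rpow_mul ht0.le]
                norm_num
                rw [show -(a⁻¹ * 3) = -(3/a) by rw [div_eq_mul_inv]; ring]
            _ = (∫⁻ t in Set.Ioi (1:ℝ), ENNReal.ofReal (t ^ (-(3/a))))
                * volume (Metric.ball (0:R3) 1) :=
                lintegral_mul_const' _ _ measure_ball_lt_top.ne
            _ < ⊤ := ENNReal.mul_lt_top
                ((integrableOn_Ioi_rpow_of_lt hlt one_pos).setLIntegral_lt_top)
                measure_ball_lt_top

lemma lintegral_indicator_sub (x : R3) {B : Set R3} (hB : MeasurableSet B) {H : R3 → ℝ≥0∞}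
    (hH : Measurable H) :
    ∫⁻ y, B.indicator H (x - y) = ∫⁻ z in B, H z := by
  have h := (Measure.measurePreserving_sub_left (volume : Measure R3) x).lintegral_comp
    (hH.indicator hB)
  simpa [lintegral_indicator hB] using h

/-- Local embedding into `H^s(K,ℂ)`. -/
theorem stmt_5 (s : ℝ) (hs : s ∈ Set.Ioo (0:ℝ) 1) (A : R3 → R3) (hA : Continuous A)
    (K : Set R3) (hK : IsCompact K) :
    ∃ C > (0:ℝ), ∀ u : R3 → ℂ, AEMeasurable u → magNorm2 s A u ≠ ⊤ →
      (∫⁻ x in K, ENNReal.ofReal (‖u x‖ ^ 2))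
          + ENNReal.ofReal (cS s / 2) *
            ∫⁻ x in K, ∫⁻ y in K, ENNReal.ofReal (‖u x - u y‖ ^ 2 / ‖x - y‖ ^ (3 + 2*s))
        ≤ ENNReal.ofReal C * magNorm2 s A u := by
  obtain ⟨hs0, hs1⟩ := hs
  obtain ⟨r0, hKr⟩ := hK.isBounded.subset_closedBall 0
  set R : ℝ := max r0 1 with hRdef
  have hR1 : (1:ℝ) ≤ R := le_max_right _ _
  have hR0 : (0:ℝ) < R := lt_of_lt_of_le one_pos hR1
  have hKR : K ⊆ Metric.closedBall 0 R :=
    hKr.trans (Metric.closedBall_subset_closedBall (le_max_left _ _))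
  obtain ⟨M0, hM0⟩ := (isCompact_closedBall (0:R3) R).exists_bound_of_continuousOn hA.continuousOn
  set M : ℝ := max M0 0 with hMdef
  have hMnn : (0:ℝ) ≤ M := le_max_right _ _
  have hMA : ∀ z ∈ Metric.closedBall (0:R3) R, ‖A z‖ ≤ M :=
    fun z hz => (hM0 z hz).trans (le_max_left _ _)
  set a : ℝ := 1 + 2*s with hadef
  have ha0 : 0 < a := by simp only [hadef]; linarith
  have ha3 : a < 3 := by simp only [hadef]; linarith
  set D : ℝ≥0∞ := ∫⁻ z in Metric.closedBall (0:R3) (2*R), ENNReal.ofReal (‖z‖ ^ (-a)) with hDdef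
  have hDfin : D < ⊤ := lintegral_closedBall_rpow_neg_lt_top ha0 ha3
  set Dr : ℝ := D.toReal with hDrdef
  have hDr0 : 0 ≤ Dr := ENNReal.toReal_nonneg
  have hDeq : D = ENNReal.ofReal Dr := (ENNReal.ofReal_toReal hDfin.ne).symm
  refine ⟨2 + |cS s / 2| * (2 * M ^ 2) * Dr, by positivity, ?_⟩
  intro u hu _
  set cst : ℝ≥0∞ := ENNReal.ofReal (cS s / 2) with hcst
  -- pointwise bound
  have key : ∀ x ∈ K, ∀ y ∈ K,
      ENNReal.ofReal (‖u x - u y‖ ^ 2 / ‖x - y‖ ^ (3 + 2*s))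
        ≤ 2 * magKer s A u x y
          + ENNReal.ofReal (2 * M ^ 2) *
              (ENNReal.ofReal (‖u x‖ ^ 2) * ENNReal.ofReal (‖x - y‖ ^ (-a))) := by
    intro x hx y hy
    by_cases hxy : x = y
    · subst hxy; simp
    · have hr0 : (0:ℝ) < ‖x - y‖ := by
        rw [norm_pos_iff]; exact sub_ne_zero.mpr hxy
      set θ : ℝ := phase A x y with hθdef
      set v : ℂ := Complex.exp (-(θ:ℂ) * Complex.I) * u x with hv
      have hmid : (2:ℝ)⁻¹ • (x + y) ∈ Metric.closedBall (0:R3) R := by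
        rw [Metric.mem_closedBall, dist_zero_right, norm_smul]
        have h1 : ‖x‖ ≤ R := by
          simpa [Metric.mem_closedBall, dist_zero_right] using hKR hx
        have h2 : ‖y‖ ≤ R := by
          simpa [Metric.mem_closedBall, dist_zero_right] using hKR hy
        have h3 := norm_add_le x y
        have : ‖(2:ℝ)⁻¹‖ = (2:ℝ)⁻¹ := by norm_num
        rw [this]
        nlinarith [norm_nonneg (x + y)]
      have hθle : |θ| ≤ M * ‖x - y‖ := by
        calc |θ| ≤ ‖x - y‖ * ‖A ((2:ℝ)⁻¹ • (x + y))‖ := abs_real_inner_le_norm _ _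
          _ ≤ ‖x - y‖ * M := by
              exact mul_le_mul_of_nonneg_left (hMA _ hmid) (norm_nonneg _)
          _ = M * ‖x - y‖ := mul_comm _ _
      have hvx : ‖v - u x‖ ≤ M * ‖x - y‖ * ‖u x‖ := by
        have hfac : v - u x = (Complex.exp (-(θ:ℂ) * Complex.I) - 1) * u x := by
          rw [hv]; ring
        rw [hfac, norm_mul]
        have hexp : ‖Complex.exp (-(θ:ℂ) * Complex.I) - 1‖ ≤ |θ| := by
          have h := norm_cexp_real_mul_I_sub_one_le (-θ)
          rw [abs_neg] at h
          convert h using 3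
          push_cast
          ring
        exact mul_le_mul (hexp.trans hθle) le_rfl (norm_nonneg _)
          (by positivity)
      have hreal : ‖u x - u y‖ ^ 2 / ‖x - y‖ ^ (3 + 2*s)
          ≤ 2 * (‖v - u y‖ ^ 2 / ‖x - y‖ ^ (3 + 2*s))
            + 2 * M ^ 2 * (‖u x‖ ^ 2 * ‖x - y‖ ^ (-a)) := by
        set r : ℝ := ‖x - y‖
        have h1 : ‖u x - u y‖ ≤ ‖v - u y‖ + ‖v - u x‖ := by
          calc ‖u x - u y‖ = ‖(v - u y) - (v - u x)‖ := by ring_nf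
            _ ≤ ‖v - u y‖ + ‖v - u x‖ := norm_sub_le _ _
        have h2 : ‖u x - u y‖ ^ 2 ≤ 2 * ‖v - u y‖ ^ 2 + 2 * (M * r * ‖u x‖) ^ 2 := by
          nlinarith [norm_nonneg (u x - u y), norm_nonneg (v - u y), norm_nonneg (v - u x),
            sq_nonneg (‖v - u y‖ - ‖v - u x‖), hvx, norm_nonneg (u x)]
        have hrp : (0:ℝ) < r ^ ((3:ℝ) + 2*s) := Real.rpow_pos_of_pos hr0 _
        have h3 : ‖u x - u y‖ ^ 2 / r ^ ((3:ℝ) + 2*s)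
            ≤ (2 * ‖v - u y‖ ^ 2 + 2 * (M * r * ‖u x‖) ^ 2) / r ^ ((3:ℝ) + 2*s) := by
          gcongr
        refine h3.trans (le_of_eq ?_)
        have h4 : r ^ (-a) = r ^ (2:ℕ) / r ^ ((3:ℝ) + 2*s) := by
          rw [show (-a) = 2 - ((3:ℝ) + 2*s) by rw [hadef]; ring, Real.rpow_sub hr0]
          norm_num [Real.rpow_two]
        rw [h4]
        field_simp
      calc ENNReal.ofReal (‖u x - u y‖ ^ 2 / ‖x - y‖ ^ (3 + 2*s))
          ≤ ENNReal.ofReal (2 * (‖v - u y‖ ^ 2 / ‖x - y‖ ^ (3 + 2*s))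
              + 2 * M ^ 2 * (‖u x‖ ^ 2 * ‖x - y‖ ^ (-a))) := ENNReal.ofReal_le_ofReal hreal
        _ = 2 * magKer s A u x y
            + ENNReal.ofReal (2 * M ^ 2) *
                (ENNReal.ofReal (‖u x‖ ^ 2) * ENNReal.ofReal (‖x - y‖ ^ (-a))) := by
            rw [ENNReal.ofReal_add (by positivity) (by positivity),
              ENNReal.ofReal_mul (by norm_num : (0:ℝ) ≤ 2),
              ENNReal.ofReal_mul (by positivity : (0:ℝ) ≤ 2 * M ^ 2),
              ENNReal.ofReal_mul (by positivity : (0:ℝ) ≤ ‖u x‖ ^ 2)]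
            simp only [magKer, hv, hθdef, ENNReal.ofReal_ofNat]
  -- measurability of the kernel in `y`
  have hcontexp : ∀ x : R3, Continuous fun y : R3 =>
      Complex.exp (-(phase A x y : ℂ) * Complex.I) := by
    intro x
    apply Complex.continuous_exp.comp
    apply Continuous.mul _ continuous_const
    apply Continuous.neg
    apply Complex.continuous_ofReal.comp
    unfold phase
    exact (continuous_const.sub continuous_id).inner
      (hA.comp (by fun_prop : Continuous fun y : R3 => (2:ℝ)⁻¹ • (x + y)))
  have hP : ∀ x : R3, AEMeasurable (fun y => magKer s A u x y) (volume.restrict K) := by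
    intro x
    unfold magKer
    apply AEMeasurable.ennreal_ofReal
    apply AEMeasurable.div
    · exact ((((hcontexp x).aemeasurable).mul_const (u x)).sub hu.restrict).norm.pow_const 2
    · exact (Measurable.aemeasurable (by fun_prop))
  have hmeasH : Measurable fun z : R3 => ENNReal.ofReal (‖z‖ ^ (-a)) := by fun_prop
  -- inner integral of the translated kernel
  have hg : ∀ x ∈ K, (∫⁻ y in K, ENNReal.ofReal (‖x - y‖ ^ (-a))) ≤ D := by
    intro x hx
    have hxR : ‖x‖ ≤ R := by
      simpa [Metric.mem_closedBall, dist_zero_right] using hKR hx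
    calc (∫⁻ y in K, ENNReal.ofReal (‖x - y‖ ^ (-a)))
        = ∫⁻ y, K.indicator (fun y => ENNReal.ofReal (‖x - y‖ ^ (-a))) y := by
          rw [lintegral_indicator hK.measurableSet]
      _ ≤ ∫⁻ y, (Metric.closedBall (0:R3) (2*R)).indicator
            (fun z => ENNReal.ofReal (‖z‖ ^ (-a))) (x - y) := by
          refine lintegral_mono fun y => ?_
          by_cases hy : y ∈ K
          · rw [Set.indicator_of_mem hy]
            have hyR : ‖y‖ ≤ R := by
              simpa [Metric.mem_closedBall, dist_zero_right] using hKR hy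
            have hxy2R : x - y ∈ Metric.closedBall (0:R3) (2*R) := by
              rw [Metric.mem_closedBall, dist_zero_right]
              calc ‖x - y‖ ≤ ‖x‖ + ‖y‖ := norm_sub_le _ _
                _ ≤ 2*R := by linarith
            rw [Set.indicator_of_mem hxy2R]
          · rw [Set.indicator_of_notMem hy]
            exact zero_le
      _ = D := lintegral_indicator_sub x measurableSet_closedBall hmeasH
  -- the double integral bound
  have houter : (∫⁻ x in K, ∫⁻ y in K, ENNReal.ofReal (‖u x - u y‖ ^ 2 / ‖x - y‖ ^ (3 + 2*s)))
      ≤ 2 * (∫⁻ x, ∫⁻ y, magKer s A u x y)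
        + (ENNReal.ofReal (2 * M ^ 2) * D) * ∫⁻ x, ENNReal.ofReal (‖u x‖ ^ 2) := by
    have step1 : (∫⁻ x in K, ∫⁻ y in K, ENNReal.ofReal (‖u x - u y‖ ^ 2 / ‖x - y‖ ^ (3 + 2*s)))
        ≤ ∫⁻ x in K, (2 * (∫⁻ y in K, magKer s A u x y)
            + (ENNReal.ofReal (2 * M ^ 2) * ENNReal.ofReal (‖u x‖ ^ 2)) * D) := by
      refine setLIntegral_mono' hK.measurableSet fun x hx => ?_
      calc (∫⁻ y in K, ENNReal.ofReal (‖u x - u y‖ ^ 2 / ‖x - y‖ ^ (3 + 2*s)))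
          ≤ ∫⁻ y in K, (2 * magKer s A u x y
              + (ENNReal.ofReal (2 * M ^ 2) * ENNReal.ofReal (‖u x‖ ^ 2))
                  * ENNReal.ofReal (‖x - y‖ ^ (-a))) := by
            refine setLIntegral_mono' hK.measurableSet fun y hy => ?_
            calc ENNReal.ofReal (‖u x - u y‖ ^ 2 / ‖x - y‖ ^ (3 + 2*s))
                ≤ 2 * magKer s A u x y
                  + ENNReal.ofReal (2 * M ^ 2) *
                      (ENNReal.ofReal (‖u x‖ ^ 2) * ENNReal.ofReal (‖x - y‖ ^ (-a))) :=
                  key x hx y hy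
              _ = 2 * magKer s A u x y
                  + (ENNReal.ofReal (2 * M ^ 2) * ENNReal.ofReal (‖u x‖ ^ 2))
                      * ENNReal.ofReal (‖x - y‖ ^ (-a)) := by ring
        _ = (∫⁻ y in K, 2 * magKer s A u x y)
            + ∫⁻ y in K, (ENNReal.ofReal (2 * M ^ 2) * ENNReal.ofReal (‖u x‖ ^ 2))
                * ENNReal.ofReal (‖x - y‖ ^ (-a)) :=
            lintegral_add_left' ((hP x).const_mul 2) _
        _ ≤ 2 * (∫⁻ y in K, magKer s A u x y)
            + (ENNReal.ofReal (2 * M ^ 2) * ENNReal.ofReal (‖u x‖ ^ 2)) * D := by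
            rw [lintegral_const_mul' 2 _ ENNReal.ofNat_ne_top,
              lintegral_const_mul' _ _
                (ENNReal.mul_ne_top ENNReal.ofReal_ne_top ENNReal.ofReal_ne_top)]
            exact add_le_add le_rfl (mul_le_mul_right (hg x hx) _)
    refine step1.trans ?_
    rw [lintegral_add_right' _
      (((hu.restrict.norm.pow_const 2).ennreal_ofReal.const_mul _).mul_const D)]
    refine add_le_add ?_ ?_
    · rw [lintegral_const_mul' 2 _ ENNReal.ofNat_ne_top]
      refine mul_le_mul_right ?_ 2
      calc (∫⁻ x in K, ∫⁻ y in K, magKer s A u x y)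
          ≤ ∫⁻ x in K, ∫⁻ y, magKer s A u x y :=
            lintegral_mono fun x => setLIntegral_le_lintegral _ _
        _ ≤ ∫⁻ x, ∫⁻ y, magKer s A u x y := setLIntegral_le_lintegral _ _
    · calc (∫⁻ x in K, (ENNReal.ofReal (2 * M ^ 2) * ENNReal.ofReal (‖u x‖ ^ 2)) * D)
          = ∫⁻ x in K, (ENNReal.ofReal (2 * M ^ 2) * D) * ENNReal.ofReal (‖u x‖ ^ 2) := by
            congr 1; ext x; ring
        _ = (ENNReal.ofReal (2 * M ^ 2) * D) * ∫⁻ x in K, ENNReal.ofReal (‖u x‖ ^ 2) :=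
            lintegral_const_mul' _ _ (ENNReal.mul_ne_top ENNReal.ofReal_ne_top hDfin.ne)
        _ ≤ (ENNReal.ofReal (2 * M ^ 2) * D) * ∫⁻ x, ENNReal.ofReal (‖u x‖ ^ 2) :=
            mul_le_mul_right (setLIntegral_le_lintegral _ _) _
  -- assemble
  have hl2K : (∫⁻ x in K, ENNReal.ofReal (‖u x‖ ^ 2)) ≤ l2sq u :=
    setLIntegral_le_lintegral _ _
  have hcoef : cst * (ENNReal.ofReal (2 * M ^ 2) * D) ≤ ENNReal.ofReal (|cS s / 2| * (2 * M ^ 2) * Dr) := by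
    calc cst * (ENNReal.ofReal (2 * M ^ 2) * D)
        ≤ ENNReal.ofReal |cS s / 2| * (ENNReal.ofReal (2 * M ^ 2) * ENNReal.ofReal Dr) := by
          rw [← hDeq]
          exact mul_le_mul_left (ENNReal.ofReal_le_ofReal (le_abs_self _)) _
      _ = ENNReal.ofReal (|cS s / 2| * (2 * M ^ 2) * Dr) := by
          rw [← ENNReal.ofReal_mul (by positivity), ← ENNReal.ofReal_mul (by positivity)]
          ring_nf
  have hC2 : ENNReal.ofReal (2 + |cS s / 2| * (2 * M ^ 2) * Dr)
      = 2 + ENNReal.ofReal (|cS s / 2| * (2 * M ^ 2) * Dr) := by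
    rw [ENNReal.ofReal_add (by norm_num) (by positivity), ENNReal.ofReal_ofNat]
  calc (∫⁻ x in K, ENNReal.ofReal (‖u x‖ ^ 2))
        + cst * ∫⁻ x in K, ∫⁻ y in K, ENNReal.ofReal (‖u x - u y‖ ^ 2 / ‖x - y‖ ^ (3 + 2*s))
      ≤ l2sq u + cst * (2 * (∫⁻ x, ∫⁻ y, magKer s A u x y)
          + (ENNReal.ofReal (2 * M ^ 2) * D) * ∫⁻ x, ENNReal.ofReal (‖u x‖ ^ 2)) :=
        add_le_add hl2K (mul_le_mul_right houter _)
    _ = (1 + cst * (ENNReal.ofReal (2 * M ^ 2) * D)) * l2sq u + 2 * magSemi2 s A u := by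
        rw [magSemi2, l2sq, ← hcst]
        ring
    _ ≤ ENNReal.ofReal (2 + |cS s / 2| * (2 * M ^ 2) * Dr) * l2sq u
        + ENNReal.ofReal (2 + |cS s / 2| * (2 * M ^ 2) * Dr) * magSemi2 s A u := by
        refine add_le_add (mul_le_mul_left ?_ _) (mul_le_mul_left ?_ _)
        · rw [hC2]
          exact add_le_add (by norm_num) hcoef
        · rw [hC2]
          exact le_add_right le_rfl
    _ = ENNReal.ofReal (2 + |cS s / 2| * (2 * M ^ 2) * Dr) * magNorm2 s A u := by
        rw [magNorm2, mul_add]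
end
end

section
/- (Gauge invariance for linear potentials.) Let s ∈ (0,1) and let A : ℝ³ → ℝ³ be a linear map. For ξ ∈ ℝ³ and a measurable u : ℝ³ → ℂ define v(x) = e^{−iA(ξ)·x}·u(x+ξ). Then ‖v‖_{s,A} = ‖u‖_{s,A}; in particular, if u ∈ H^s_A(ℝ³,ℂ) then v ∈ H^s_A(ℝ³,ℂ). -/
noncomputable section

open MeasureTheory Filter Topology
open scoped ENNReal

lemma norm_exp_neg_mul_I (r : ℝ) : ‖Complex.exp (-(r:ℂ) * Complex.I)‖ = 1 := by
  simp [Complex.norm_exp]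

lemma phase_shift {A : R3 → R3} (hlin : IsLinearMap ℝ A) (ξ x y : R3) :
    phase A (x + ξ) (y + ξ)
      = phase A x y + ((inner ℝ (A ξ) x : ℝ) - (inner ℝ (A ξ) y : ℝ)) := by
  unfold phase
  have h1 : (2:ℝ)⁻¹ • (x + ξ + (y + ξ)) = (2:ℝ)⁻¹ • (x + y) + ξ := by
    rw [show x + ξ + (y + ξ) = (x + y) + (2:ℝ) • ξ by
      rw [two_smul]; abel]
    rw [smul_add, smul_smul]; norm_num
  have h2 : x + ξ - (y + ξ) = x - y := by abel
  rw [h1, h2, hlin.map_add, inner_add_right]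
  congr 1
  rw [inner_sub_left, real_inner_comm x (A ξ), real_inner_comm y (A ξ)]

/-- The gaugeT transform. -/
def gaugeT (A : R3 → R3) (ξ : R3) (u : R3 → ℂ) : R3 → ℂ :=
  fun x => Complex.exp (-((inner ℝ (A ξ) x : ℝ) : ℂ) * Complex.I) * u (x + ξ)

lemma magKer_gauge {A : R3 → R3} (hlin : IsLinearMap ℝ A) (s : ℝ) (ξ : R3) (u : R3 → ℂ)
    (x y : R3) : magKer s A (gaugeT A ξ u) x y = magKer s A u (x + ξ) (y + ξ) := by
  unfold magKer gaugeT
  have hden : x + ξ - (y + ξ) = x - y := by abel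
  rw [hden]
  congr 2
  set p : ℝ := phase A x y
  set a : ℝ := inner ℝ (A ξ) x
  set b : ℝ := inner ℝ (A ξ) y
  have hP : phase A (x + ξ) (y + ξ) = p + (a - b) := phase_shift hlin ξ x y
  rw [hP]
  have hfac : Complex.exp (-(p:ℂ) * Complex.I) *
        (Complex.exp (-(a:ℂ) * Complex.I) * u (x + ξ)) -
        Complex.exp (-(b:ℂ) * Complex.I) * u (y + ξ)
      = Complex.exp (-(b:ℂ) * Complex.I) *
        (Complex.exp (-((p + (a - b) : ℝ) : ℂ) * Complex.I) * u (x + ξ) - u (y + ξ)) := by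
    have he : Complex.exp (-(p:ℂ) * Complex.I) * Complex.exp (-(a:ℂ) * Complex.I)
        = Complex.exp (-(b:ℂ) * Complex.I) *
            Complex.exp (-((p + (a - b) : ℝ) : ℂ) * Complex.I) := by
      rw [← Complex.exp_add, ← Complex.exp_add]
      congr 1
      push_cast
      ring
    rw [mul_sub, ← mul_assoc, ← mul_assoc, he]
  rw [hfac, norm_mul, norm_exp_neg_mul_I, one_mul]

lemma magNorm2_gauge {A : R3 → R3} (hlin : IsLinearMap ℝ A) (s : ℝ) (ξ : R3)
    (u : R3 → ℂ) : magNorm2 s A (gaugeT A ξ u) = magNorm2 s A u := by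
  unfold magNorm2
  congr 1
  · unfold l2sq gaugeT
    have : ∀ x : R3, ENNReal.ofReal
        (‖Complex.exp (-((inner ℝ (A ξ) x : ℝ) : ℂ) * Complex.I) * u (x + ξ)‖ ^ 2)
        = ENNReal.ofReal (‖u (x + ξ)‖ ^ 2) := by
      intro x
      rw [norm_mul, norm_exp_neg_mul_I, one_mul]
    simp_rw [this]
    exact lintegral_add_right_eq_self (fun x => ENNReal.ofReal (‖u x‖ ^ 2)) ξ
  · unfold magSemi2
    congr 1
    simp_rw [magKer_gauge hlin s ξ u]
    have hin : ∀ x : R3, ∫⁻ y, magKer s A u (x + ξ) (y + ξ)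
        = ∫⁻ y, magKer s A u (x + ξ) y := by
      intro x
      exact lintegral_add_right_eq_self (fun y => magKer s A u (x + ξ) y) ξ
    simp_rw [hin]
    exact lintegral_add_right_eq_self (fun x => ∫⁻ y, magKer s A u x y) ξ

lemma gauge_cinfc {A : R3 → R3} (ξ : R3) {φ : R3 → ℂ} (hφ : IsCinfc φ) :
    IsCinfc (gaugeT A ξ φ) := by
  constructor
  · have h1 : ContDiff ℝ (⊤ : ℕ∞) fun x : R3 =>
        Complex.exp (-((inner ℝ (A ξ) x : ℝ) : ℂ) * Complex.I) := by
      apply Complex.contDiff_exp.comp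
      exact ((Complex.ofRealCLM.contDiff.comp (innerSL ℝ (A ξ)).contDiff).neg).mul
        contDiff_const
    exact h1.mul (hφ.1.comp (contDiff_id.add contDiff_const))
  · have h2 : HasCompactSupport fun x : R3 => φ (x + ξ) :=
      hφ.2.comp_homeomorph (Homeomorph.addRight ξ)
    exact h2.mul_left

lemma gauge_aemeasurable {A : R3 → R3} (ξ : R3) {u : R3 → ℂ} (hu : AEMeasurable u) :
    AEMeasurable (gaugeT A ξ u) := by
  have h1 : Continuous fun x : R3 =>
      Complex.exp (-((inner ℝ (A ξ) x : ℝ) : ℂ) * Complex.I) := by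
    apply Complex.continuous_exp.comp
    exact ((Complex.continuous_ofReal.comp (innerSL ℝ (A ξ)).continuous).neg).mul
      continuous_const
  exact h1.aemeasurable.mul
    (hu.comp_quasiMeasurePreserving (measurePreserving_add_right volume ξ).quasiMeasurePreserving : AEMeasurable (fun x => u (x + ξ)) volume)

/-- Gauge invariance for linear potentials. -/
theorem stmt_10 (s : ℝ) (hs : s ∈ Set.Ioo (0:ℝ) 1) (A : R3 → R3)
    (hlin : IsLinearMap ℝ A) (ξ : R3) (u : R3 → ℂ)
    (v : R3 → ℂ)
    (hv : ∀ x, v x = Complex.exp (-((inner ℝ (A ξ) x : ℝ) : ℂ) * Complex.I) * u (x + ξ)) :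
    magNorm2 s A v = magNorm2 s A u ∧ (MemHsA s A u → MemHsA s A v) := by
  have hveq : v = gaugeT A ξ u := funext hv
  subst hveq
  refine ⟨magNorm2_gauge hlin s ξ u, ?_⟩
  rintro ⟨hmeas, hfin, happ⟩
  refine ⟨gauge_aemeasurable ξ hmeas, by rw [magNorm2_gauge hlin]; exact hfin, ?_⟩
  intro ε hε
  obtain ⟨φ, hφ, hφε⟩ := happ ε hε
  refine ⟨gaugeT A ξ φ, gauge_cinfc ξ hφ, ?_⟩
  have : (fun x => gaugeT A ξ u x - gaugeT A ξ φ x)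
      = gaugeT A ξ (fun x => u x - φ x) := by
    funext x
    simp [gaugeT, mul_sub]
  rw [this, magNorm2_gauge hlin]
  exact hφε
end
end
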